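/- arXiv:1611.04889 — 3 statements merged into one kernel-verified Lean document; each statement's English description precedes it below -/
import Mathlib

section
/- Let R be a commutative ring with ℚ ⊆ R, let N ≥ 1, and let M be an N × N matrix over R. In the Grassmann algebra on the 2N generators χ̄₁,χ₁,…,χ̄_N,χ_N, one has det M = ∫ dχ̄_N dχ_N ⋯ dχ̄₁ dχ₁ exp(-Σ_{i,j=1}^N χ̄_i M_{ij} χ_j), i.e. the appropriately signed coefficient of the top monomial in exp(-Σ_{i,j} χ̄_i M_{ij} χ_j) equals det M. -/
open Matrix

/-!
STATEMENT 1: For a commutative ring `R` containing `ℚ`, `N ≥ 1` and an `N × N` matrix `M`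
over `R`, one has `det M = ∫ dχ̄_N dχ_N ⋯ dχ̄₁ dχ₁ exp(-∑ᵢⱼ χ̄ᵢ Mᵢⱼ χⱼ)`.

The Grassmann algebra on the `2N` generators `χ̄₁, χ₁, …, χ̄_N, χ_N` is realized as the
exterior algebra of `Fin (2N) → R`, with `χ_i` the standard basis vector of index
`2(i-1)` and `χ̄_i` the one of index `2(i-1)+1`.  The Berezin integral
`∫ dχ̄_N dχ_N ⋯ dχ̄₁ dχ₁` is the linear form sending the monomial
`χ₁ χ̄₁ χ₂ χ̄₂ ⋯ χ_N χ̄_N` to `1` (and all lower monomials to `0`), i.e. the coefficient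
extraction for the top monomial taken in the order `χ₁, χ̄₁, χ₂, χ̄₂, …`.
-/

/-- The `i`-th Grassmann generator. -/
noncomputable def gVar (R : Type*) [CommRing R] (m : ℕ) (i : Fin m) :
    ExteriorAlgebra R (Fin m → R) :=
  ExteriorAlgebra.ι R (Pi.single i 1)

/-- The Grassmann (Berezin) integral: the `R`-linear form extracting the coefficient of
the ordered top monomial (generator `0` times generator `1` times … times generator
`m-1`). -/
noncomputable def berezin (R : Type*) [CommRing R] (m : ℕ) :
    ExteriorAlgebra R (Fin m → R) →ₗ[R] R :=
  ExteriorAlgebra.liftAlternating fun i =>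
    if h : i = m then by subst h; exact Matrix.detRowAlternating else 0

/-- Exponential of a Grassmann algebra element (truncated at order `m`, which is exact
for elements with zero constant term). -/
noncomputable def gExp {R : Type*} [CommRing R] [Algebra ℚ R] {m : ℕ}
    (x : ExteriorAlgebra R (Fin m → R)) : ExteriorAlgebra R (Fin m → R) :=
  ∑ p ∈ Finset.range (m + 1), algebraMap ℚ R ((p.factorial : ℚ))⁻¹ • x ^ p

/-- The Grassmann variable `χ_i`, `i : Fin N`: basis vector number `2i`. -/
noncomputable def chi (R : Type*) [CommRing R] (N : ℕ) (i : Fin N) :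
    ExteriorAlgebra R (Fin (2 * N) → R) :=
  gVar R (2 * N) ⟨2 * i.1, by have := i.isLt; omega⟩

/-- The conjugate Grassmann variable `χ̄_i`, `i : Fin N`: basis vector number `2i+1`. -/
noncomputable def chibar (R : Type*) [CommRing R] (N : ℕ) (i : Fin N) :
    ExteriorAlgebra R (Fin (2 * N) → R) :=
  gVar R (2 * N) ⟨2 * i.1 + 1, by have := i.isLt; omega⟩

/-!
Rewrite `-∑ᵢⱼ χ̄ᵢ Mᵢⱼ χⱼ = ∑ᵢ yᵢ` with `yᵢ = (∑ⱼ Mᵢⱼ χⱼ) χ̄ᵢ`. The `yᵢ` are products of two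
generators, hence pairwise commuting and of square zero, so `(∑ᵢ yᵢ)^N = N! • y₁ ⋯ y_N`, while
every other power of `∑ᵢ yᵢ` is homogeneous of a degree `≠ 2N` and is killed by the integral.
The product `y₁ ⋯ y_N` is a wedge of `2N` vectors, on which the Berezin integral is the
determinant of the matrix formed by them; reindexed by `pairEquiv`, this matrix is
`blockDiagonal ![M, 1]`, of determinant `det M`.
-/

open ExteriorAlgebra

section PairsOfGenerators

variable {R M : Type*} [CommRing R] [AddCommGroup M] [Module R M]

theorem ExteriorAlgebra.ι_mul_ι_anticomm (a b : M) : ι R a * ι R b = -(ι R b * ι R a) :=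
  eq_neg_of_add_eq_zero_left (ι_add_mul_swap a b)

theorem ExteriorAlgebra.commute_ι_ι_mul_ι (x a b : M) : Commute (ι R x) (ι R a * ι R b) := by
  simp only [Commute, SemiconjBy, ← mul_assoc, ι_mul_ι_anticomm x a, neg_mul]
  rw [mul_assoc, ι_mul_ι_anticomm x b, mul_neg, neg_neg, mul_assoc]

theorem ExteriorAlgebra.commute_ι_mul_ι (a b c d : M) :
    Commute (ι R a * ι R b) (ι R c * ι R d) :=
  (commute_ι_ι_mul_ι c a b).symm.mul_right (commute_ι_ι_mul_ι d a b).symm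

theorem ExteriorAlgebra.ι_mul_ι_mul_self (a b : M) : ι R a * ι R b * (ι R a * ι R b) = 0 := by
  rw [mul_assoc, (commute_ι_ι_mul_ι b a b).eq, ← mul_assoc, ← mul_assoc, ι_sq_zero, zero_mul,
    zero_mul]

theorem ExteriorAlgebra.ι_mul_ι_mem_exteriorPower_two (a b : M) :
    ι R a * ι R b ∈ ⋀[R]^2 M := by
  simpa [ιMulti_apply] using ιMulti_range R 2 ⟨![a, b], rfl⟩

end PairsOfGenerators

section SquareZero

variable {A : Type*} [Ring A]

theorem Commute.add_pow_succ_of_mul_self_eq_zero {x y : A} (hc : Commute x y) (hx : x * x = 0)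
    (p : ℕ) : (x + y) ^ (p + 1) = y ^ (p + 1) + (p + 1) • (x * y ^ p) := by
  have hx2 : ∀ m, x ^ (m + 2) = 0 := fun m =>
    pow_eq_zero_of_le (m := 2) (by omega) (by rwa [sq])
  rw [hc.add_pow, Finset.sum_range_succ', Finset.sum_range_succ',
    Finset.sum_eq_zero fun m _ => by rw [hx2, zero_mul, zero_mul], add_comm (y ^ (p + 1)),
    nsmul_eq_mul']
  simp

theorem sum_pow_eq_zero_of_card_lt {n : ℕ} (x : Fin n → A) (hc : ∀ i j, Commute (x i) (x j))
    (hx : ∀ i, x i * x i = 0) {p : ℕ} (hp : n < p) : (∑ i, x i) ^ p = 0 := by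
  induction n generalizing p with
  | zero => simp [zero_pow (Nat.pos_iff_ne_zero.mp hp)]
  | succ n ih =>
    obtain ⟨q, rfl⟩ : ∃ q, p = q + 1 := ⟨p - 1, by omega⟩
    have h₀ : Commute (x 0) (∑ i : Fin n, x i.succ) :=
      Commute.sum_right _ _ _ fun i _ => hc 0 i.succ
    have htail : ∀ {p}, n < p → (∑ i : Fin n, x i.succ) ^ p = 0 :=
      ih _ (fun i j => hc _ _) (fun i => hx _)
    rw [Fin.sum_univ_succ, h₀.add_pow_succ_of_mul_self_eq_zero (hx 0), htail (by omega),
      htail (by omega), mul_zero, smul_zero, add_zero]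

theorem sum_pow_card_eq_factorial_smul_prod {n : ℕ} (x : Fin n → A)
    (hc : ∀ i j, Commute (x i) (x j)) (hx : ∀ i, x i * x i = 0) :
    (∑ i, x i) ^ n = n.factorial • (List.ofFn x).prod := by
  induction n with
  | zero => simp
  | succ n ih =>
    have h₀ : Commute (x 0) (∑ i : Fin n, x i.succ) :=
      Commute.sum_right _ _ _ fun i _ => hc 0 i.succ
    rw [Fin.sum_univ_succ, h₀.add_pow_succ_of_mul_self_eq_zero (hx 0),
      sum_pow_eq_zero_of_card_lt _ (fun i j => hc _ _) (fun i => hx _) (Nat.lt_succ_self n),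
      ih (fun i => x i.succ) (fun i j => hc _ _) (fun i => hx _), List.ofFn_succ, List.prod_cons,
      Nat.factorial_succ, zero_add, mul_smul_comm, smul_smul]

end SquareZero

section Berezin

variable {R : Type*} [CommRing R]

theorem berezin_ιMulti {m : ℕ} (v : Fin m → Fin m → R) :
    berezin R m (ιMulti R m v) = (Matrix.of v).det := by
  rw [berezin, liftAlternating_apply_ιMulti, dif_pos rfl]
  rfl

theorem berezin_eq_zero_of_mem_exteriorPower {m n : ℕ} (h : n ≠ m)
    {x : ExteriorAlgebra R (Fin m → R)} (hx : x ∈ ⋀[R]^n (Fin m → R)) : berezin R m x = 0 := by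
  suffices ⋀[R]^n (Fin m → R) ≤ LinearMap.ker (berezin R m) from this hx
  rw [← ιMulti_span_fixedDegree, Submodule.span_le]
  rintro _ ⟨v, rfl⟩
  simp [berezin, liftAlternating_apply_ιMulti, h]

theorem berezin_gExp_of_mem_exteriorPower_two [Algebra ℚ R] {N : ℕ}
    {x : ExteriorAlgebra R (Fin (2 * N) → R)} (hx : x ∈ ⋀[R]^2 (Fin (2 * N) → R)) :
    berezin R (2 * N) (gExp x)
      = algebraMap ℚ R (N.factorial : ℚ)⁻¹ • berezin R (2 * N) (x ^ N) := by
  rw [gExp, map_sum, Finset.sum_eq_single N]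
  · exact map_smul _ _ _
  · intro p _ hp
    have hxp : x ^ p ∈ ⋀[R]^(2 * p) (Fin (2 * N) → R) := by
      rw [exteriorPower, pow_mul]
      exact Submodule.pow_mem_pow _ hx p
    rw [map_smul, berezin_eq_zero_of_mem_exteriorPower (by omega) hxp, smul_zero]
  · intro hN
    exact absurd (Finset.mem_range.mpr (by omega)) hN

end Berezin

/-- `(i, s) ↦ 2i + s`: `(i, 0)` indexes `χ_i` and `(i, 1)` indexes `χ̄_i`. -/
def pairEquiv (N : ℕ) : Fin N × Fin 2 ≃ Fin (2 * N) :=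
  finProdFinEquiv.trans (finCongr (Nat.mul_comm N 2))

theorem pairEquiv_apply_val {N : ℕ} (i : Fin N) (s : Fin 2) :
    (pairEquiv N (i, s) : ℕ) = 2 * i + s := by
  simp [pairEquiv, finProdFinEquiv, add_comm]

theorem pairEquiv_mk_zero {N : ℕ} (i : Fin N) :
    pairEquiv N (i, 0) = ⟨2 * i.1, by have := i.isLt; omega⟩ :=
  Fin.ext (pairEquiv_apply_val i 0)

theorem pairEquiv_mk_one {N : ℕ} (i : Fin N) :
    pairEquiv N (i, 1) = ⟨2 * i.1 + 1, by have := i.isLt; omega⟩ :=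
  Fin.ext (pairEquiv_apply_val i 1)

theorem ExteriorAlgebra.ιMulti_comp_pairEquiv_symm {R M : Type*} [CommRing R] [AddCommGroup M]
    [Module R M] {N : ℕ} (v : Fin N × Fin 2 → M) :
    ιMulti R (2 * N) (v ∘ (pairEquiv N).symm)
      = (List.ofFn fun i => ι R (v (i, 0)) * ι R (v (i, 1))).prod := by
  have hv : ∀ (i : Fin N) (s : Fin 2) (h : 2 * (i : ℕ) + s < 2 * N),
      v ((pairEquiv N).symm ⟨2 * i + s, h⟩) = v (i, s) := by
    intro i s h
    rw [(Equiv.symm_apply_eq _).mpr (Fin.ext (pairEquiv_apply_val i s).symm)]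
  rw [ιMulti_apply, List.ofFn_mul', List.prod_flatten, List.map_ofFn]
  congr 1
  ext1 i
  simp [List.ofFn_succ, hv]

section Generators

variable {R : Type*} [CommRing R]

theorem chi_eq_gVar_pairEquiv {N : ℕ} (i : Fin N) :
    chi R N i = gVar R (2 * N) (pairEquiv N (i, 0)) := by
  rw [chi, pairEquiv_mk_zero]

theorem chibar_eq_gVar_pairEquiv {N : ℕ} (i : Fin N) :
    chibar R N i = gVar R (2 * N) (pairEquiv N (i, 1)) := by
  rw [chibar, pairEquiv_mk_one]

theorem ι_comp_symm_eq_sum_smul_gVar {n : Type*} [Fintype n] {m : ℕ} (e : n ≃ Fin m)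
    (v : n → R) : ι R (v ∘ e.symm) = ∑ q, v q • gVar R m (e q) := by
  simp only [gVar, ← map_smul, ← map_sum]
  congr 1
  ext l
  simp only [Finset.sum_apply, Pi.smul_apply, Pi.single_apply, smul_eq_mul, mul_ite, mul_one,
    mul_zero]
  rw [Finset.sum_eq_single (e.symm l) (fun q _ hq => if_neg (by rintro rfl; simp at hq))
    (by simp), if_pos (e.apply_symm_apply l).symm, Function.comp_apply]

end Generators

section BlockRows

variable {R : Type*} [CommRing R] {N : ℕ}

def blockRow (M : Matrix (Fin N) (Fin N) R) (p : Fin N × Fin 2) : Fin (2 * N) → R :=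
  Matrix.blockDiagonal ![M, 1] p ∘ (pairEquiv N).symm

theorem det_of_blockRow_comp_symm (M : Matrix (Fin N) (Fin N) R) :
    (Matrix.of (blockRow M ∘ (pairEquiv N).symm)).det = M.det := by
  change (Matrix.reindex (pairEquiv N) (pairEquiv N) (Matrix.blockDiagonal ![M, 1])).det = _
  simp [Matrix.det_blockDiagonal]

theorem ι_blockRow_zero (M : Matrix (Fin N) (Fin N) R) (i : Fin N) :
    ι R (blockRow M (i, 0)) = ∑ j, M i j • chi R N j := by
  simp [blockRow, ι_comp_symm_eq_sum_smul_gVar, Fintype.sum_prod_type,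
    Matrix.blockDiagonal_apply, chi_eq_gVar_pairEquiv]

theorem ι_blockRow_one (M : Matrix (Fin N) (Fin N) R) (i : Fin N) :
    ι R (blockRow M (i, 1)) = chibar R N i := by
  simp [blockRow, ι_comp_symm_eq_sum_smul_gVar, Fintype.sum_prod_type,
    Matrix.blockDiagonal_apply, Matrix.one_apply, chibar_eq_gVar_pairEquiv]

theorem neg_sum_smul_chibar_mul_chi (M : Matrix (Fin N) (Fin N) R) :
    -∑ i, ∑ j, M i j • (chibar R N i * chi R N j)
      = ∑ i, ι R (blockRow M (i, 0)) * ι R (blockRow M (i, 1)) := by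
  have hanti : ∀ i j, chibar R N i * chi R N j = -(chi R N j * chibar R N i) :=
    fun i j => ι_mul_ι_anticomm _ _
  simp only [hanti, smul_neg, Finset.sum_neg_distrib, neg_neg, ι_blockRow_zero, ι_blockRow_one,
    Finset.sum_mul, smul_mul_assoc]

end BlockRows

theorem stmt1_general (R : Type*) [CommRing R] [Algebra ℚ R] (N : ℕ)
    (M : Matrix (Fin N) (Fin N) R) :
    M.det =
      berezin R (2 * N)
        (gExp (-∑ i : Fin N, ∑ j : Fin N, M i j • (chibar R N i * chi R N j))) := by
  let y : Fin N → ExteriorAlgebra R (Fin (2 * N) → R) := fun i =>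
    ι R (blockRow M (i, 0)) * ι R (blockRow M (i, 1))
  have hmem : ∑ i, y i ∈ ⋀[R]^2 (Fin (2 * N) → R) :=
    Submodule.sum_mem _ fun i _ => ι_mul_ι_mem_exteriorPower_two _ _
  calc M.det = berezin R (2 * N) (ιMulti R (2 * N) (blockRow M ∘ (pairEquiv N).symm)) := by
        rw [berezin_ιMulti, det_of_blockRow_comp_symm]
    _ = berezin R (2 * N) (List.ofFn y).prod := by rw [ιMulti_comp_pairEquiv_symm]
    _ = algebraMap ℚ R (N.factorial : ℚ)⁻¹ • berezin R (2 * N) ((∑ i, y i) ^ N) := by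
      rw [sum_pow_card_eq_factorial_smul_prod y (fun i j => commute_ι_mul_ι _ _ _ _)
        (fun i => ι_mul_ι_mul_self _ _), map_nsmul, algebraMap_smul,
        ← Nat.cast_smul_eq_nsmul ℚ, inv_smul_smul₀ (by positivity)]
    _ = _ := by rw [neg_sum_smul_chibar_mul_chi, berezin_gExp_of_mem_exteriorPower_two hmem]

theorem stmt1 (R : Type*) [CommRing R] [Algebra ℚ R] (N : ℕ) (hN : 1 ≤ N)
    (M : Matrix (Fin N) (Fin N) R) :
    M.det =
      berezin R (2 * N)
        (gExp (-∑ i : Fin N, ∑ j : Fin N, M i j • (chibar R N i * chi R N j))) :=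
  stmt1_general R N M
end

section
/- For every m ≥ 1, the sum over all fixed-point-free involutions σ of {1,…,2m} of (-1)^{cr(σ)} equals 1, where cr(σ) is the number of crossings of σ. -/
/-- A crossing is recorded once, as the pair `(a, c)` of left endpoints with
`a < c < σ a < σ c`. -/
def crossings {m : ℕ} (σ : Equiv.Perm (Fin (2 * m))) : ℕ :=
  (Finset.univ.filter fun p : Fin (2 * m) × Fin (2 * m) =>
    p.1 < p.2 ∧ p.2 < σ p.1 ∧ σ p.1 < σ p.2).card

/-!
The adjacent matching `{0,1}, {2,3}, …` has no crossings. Any other fixed-point-free involution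
`σ` first deviates from it at an even point `a`, where `a` and `b = a + 1` are both left endpoints
of arcs. Exchanging their partners (conjugating `σ` by the transposition `(a b)`) keeps the first
deviation at `a`, so it is an involution on the other matchings. As `a` and `b` are neighbours,
relabelling `a ↔ b` preserves every comparison except `a < b`: it maps the crossings other than
`(a, b)` bijectively, while the arcs at `a` and `b` cross in exactly one of the two matchings.
So the involution reverses the sign `(-1) ^ cr`, and only the adjacent matching survives.
-/

open Equiv Finset Function

lemma Equiv.Perm.involutive_iff_mul_self_eq_one {α : Type*} {σ : Perm α} :
    Involutive σ ↔ σ * σ = 1 := by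
  simp [Involutive, Perm.ext_iff]

section Conjugation

variable {α : Type*} [DecidableEq α] {σ : Perm α}

lemma involutive_swap_mul_mul_swap (hσ : Involutive σ) (a b : α) :
    Involutive (swap a b * σ * swap a b) := by
  intro x
  simp [hσ _]

lemma swap_mul_mul_swap_apply_ne (hfix : ∀ i, σ i ≠ i) (a b x : α) :
    (swap a b * σ * swap a b) x ≠ x := by
  rw [Perm.mul_apply, Perm.mul_apply, Ne, swap_apply_eq_iff]
  exact hfix _

end Conjugation

section Crossings

variable {α : Type*} [LinearOrder α] {σ : Perm α} {a b : α}

lemma swap_lt_swap_of_covBy (hab : a ⋖ b) {x y : α} (hxy : x < y) (hne : (x, y) ≠ (a, b)) :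
    swap a b x < swap a b y := by
  obtain ⟨hlt, hnone⟩ := hab
  rw [swap_apply_def, swap_apply_def]
  grind

lemma lt_apply_of_covBy (hσ : Involutive σ) (hab : a ⋖ b) (ha : a < σ a) (hb : b < σ b) :
    b < σ a := by
  refine (hab.ge_of_gt ha).lt_of_ne fun h => ?_
  rw [h, hσ] at hb
  exact lt_asymm hb ha

lemma swap_mul_mul_swap_apply_left (hab : a < b) (hb : b < σ b) :
    (swap a b * σ * swap a b) a = σ b := by
  rw [Perm.mul_apply, Perm.mul_apply, swap_apply_left,
    swap_apply_of_ne_of_ne (hab.trans hb).ne' hb.ne']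

lemma swap_mul_mul_swap_apply_right (hab : a < b) (hba : b < σ a) :
    (swap a b * σ * swap a b) b = σ a := by
  rw [Perm.mul_apply, Perm.mul_apply, swap_apply_right,
    swap_apply_of_ne_of_ne (hab.trans hba).ne' hba.ne']

variable [Fintype α]

def crossingSet (σ : Perm α) : Finset (α × α) :=
  {p | p.1 < p.2 ∧ p.2 < σ p.1 ∧ σ p.1 < σ p.2}

@[simp]
lemma mem_crossingSet {p : α × α} :
    p ∈ crossingSet σ ↔ p.1 < p.2 ∧ p.2 < σ p.1 ∧ σ p.1 < σ p.2 := by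
  simp [crossingSet]

lemma swap_mk_mem_crossingSet_erase (hσ : Involutive σ) (hab : a ⋖ b) (ha : a < σ a)
    (hb : b < σ b) {p : α × α} (hp : p ∈ (crossingSet σ).erase (a, b)) :
    (swap a b p.1, swap a b p.2) ∈ (crossingSet (swap a b * σ * swap a b)).erase (a, b) := by
  obtain ⟨p, q⟩ := p
  simp only [mem_erase, mem_crossingSet, ne_eq, Perm.mul_apply, swap_apply_self] at hp ⊢
  obtain ⟨hne, hpq, hqp, hpq'⟩ := hp
  refine ⟨?_, swap_lt_swap_of_covBy hab hpq hne, swap_lt_swap_of_covBy hab hqp ?_,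
    swap_lt_swap_of_covBy hab hpq' ?_⟩
  · simp only [Prod.mk.injEq, swap_apply_eq_iff, swap_apply_left, swap_apply_right]
    rintro ⟨rfl, rfl⟩
    exact lt_asymm hpq hab.lt
  · simp only [ne_eq, Prod.mk.injEq]
    rintro ⟨-, hσp⟩
    have hσb : σ b = p := hσp ▸ hσ p
    exact lt_asymm (hσb ▸ hb) (hσp ▸ hpq.trans hqp)
  · simp only [ne_eq, Prod.mk.injEq]
    rintro ⟨hσp, -⟩
    have hσa : σ a = p := hσp ▸ hσ p
    exact lt_asymm (hσa ▸ ha) (hσp ▸ hpq.trans hqp)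

lemma card_crossingSet_swap_mul_mul_swap_erase (hσ : Involutive σ) (hab : a ⋖ b)
    (ha : a < σ a) (hb : b < σ b) :
    #((crossingSet (swap a b * σ * swap a b)).erase (a, b)) = #((crossingSet σ).erase (a, b)) := by
  have hba := lt_apply_of_covBy hσ hab ha hb
  have hτa : a < (swap a b * σ * swap a b) a := by
    rw [swap_mul_mul_swap_apply_left hab.lt hb]
    exact hab.lt.trans hb
  have hτb : b < (swap a b * σ * swap a b) b := by
    rwa [swap_mul_mul_swap_apply_right hab.lt hba]
  have hback : swap a b * (swap a b * σ * swap a b) * swap a b = σ := by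
    ext
    simp
  refine card_nbij' (fun p => (swap a b p.1, swap a b p.2)) (fun p => (swap a b p.1, swap a b p.2))
    (fun p hp => mem_coe.2 ?_) (fun p hp => swap_mk_mem_crossingSet_erase hσ hab ha hb hp)
    (fun p _ => by simp) (fun p _ => by simp)
  simpa only [hback] using
    swap_mk_mem_crossingSet_erase (involutive_swap_mul_mul_swap hσ a b) hab hτa hτb hp

lemma neg_one_pow_card_crossingSet_swap_mul_mul_swap (hσ : Involutive σ) (hab : a ⋖ b)
    (ha : a < σ a) (hb : b < σ b) :
    (-1 : ℤ) ^ #(crossingSet (swap a b * σ * swap a b)) = -(-1) ^ #(crossingSet σ) := by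
  have hcard := card_crossingSet_swap_mul_mul_swap_erase hσ hab ha hb
  have hba := lt_apply_of_covBy hσ hab ha hb
  have hσab : (a, b) ∈ crossingSet σ ↔ σ a < σ b := by
    simp [hab.lt, hba]
  have hτab : (a, b) ∈ crossingSet (swap a b * σ * swap a b) ↔ σ b < σ a := by
    simp [swap_mul_mul_swap_apply_left hab.lt hb, swap_mul_mul_swap_apply_right hab.lt hba,
      hab.lt, hb]
  rcases lt_or_gt_of_ne (σ.injective.ne hab.ne) with h | h
  · rw [← card_erase_add_one (hσab.2 h), ← hcard,
      erase_eq_of_notMem fun hm => lt_asymm h (hτab.1 hm), pow_succ, mul_neg_one, neg_neg]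
  · rw [← card_erase_add_one (hτab.2 h), hcard,
      erase_eq_of_notMem fun hm => lt_asymm h (hσab.1 hm), pow_succ, mul_neg_one]

end Crossings

section AdjacentMatching

variable {m : ℕ}

lemma crossings_eq_card_crossingSet (σ : Perm (Fin (2 * m))) :
    crossings σ = #(crossingSet σ) :=
  rfl

def adjacentMatching (m : ℕ) : Perm (Fin (2 * m)) :=
  Involutive.toPerm (fun i => ⟨if (i : ℕ) % 2 = 0 then i + 1 else i - 1, by split_ifs <;> omega⟩)
    fun i => by ext; dsimp only; split_ifs <;> omega

lemma adjacentMatching_val (i : Fin (2 * m)) :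
    (adjacentMatching m i : ℕ) = if (i : ℕ) % 2 = 0 then (i : ℕ) + 1 else (i : ℕ) - 1 :=
  rfl

lemma involutive_adjacentMatching : Involutive (adjacentMatching m) := fun i => by
  ext; simp only [adjacentMatching_val]; split_ifs <;> omega

lemma adjacentMatching_apply_ne (i : Fin (2 * m)) : adjacentMatching m i ≠ i := by
  rw [ne_eq, Fin.ext_iff, adjacentMatching_val]; split_ifs <;> omega

lemma crossings_adjacentMatching : crossings (adjacentMatching m) = 0 := by
  rw [crossings_eq_card_crossingSet, card_eq_zero, eq_empty_iff_forall_notMem]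
  rintro ⟨p, q⟩ hpq
  simp only [crossingSet, mem_filter, mem_univ, true_and, Fin.lt_def, adjacentMatching_val] at hpq
  split_ifs at hpq <;> omega

def IsFirstDeviation (σ : Perm (Fin (2 * m))) (a : Fin (2 * m)) : Prop :=
  σ a ≠ adjacentMatching m a ∧ ∀ c < a, σ c = adjacentMatching m c

variable {σ : Perm (Fin (2 * m))} {a : Fin (2 * m)}

lemma exists_isFirstDeviation (h : σ ≠ adjacentMatching m) : ∃ a, IsFirstDeviation σ a := by
  obtain ⟨x, hx⟩ : ∃ x, σ x ≠ adjacentMatching m x := by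
    by_contra! hall
    exact h (Perm.ext hall)
  obtain ⟨a, ha, hmin⟩ := wellFounded_lt.has_min {a | σ a ≠ adjacentMatching m a} ⟨x, hx⟩
  exact ⟨a, ha, fun c hc => by simpa using mt (hmin c) (not_not.2 hc)⟩

lemma IsFirstDeviation.ne_adjacentMatching (h : IsFirstDeviation σ a) : σ ≠ adjacentMatching m :=
  fun he => h.1 (he ▸ rfl)

lemma IsFirstDeviation.unique {a' : Fin (2 * m)} (h : IsFirstDeviation σ a)
    (h' : IsFirstDeviation σ a') : a = a' := by
  rcases lt_trichotomy a a' with hlt | heq | hgt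
  · exact absurd (h'.2 a hlt) h.1
  · exact heq
  · exact absurd (h.2 a' hgt) h'.1

namespace IsFirstDeviation

variable (hσ : Involutive σ) (h : IsFirstDeviation σ a)
include hσ h

lemma val_mod_two : (a : ℕ) % 2 = 0 := by
  by_contra hodd
  set c : Fin (2 * m) := ⟨(a : ℕ) - 1, by omega⟩
  have hca : c < a := by rw [Fin.lt_def]; dsimp only [c]; omega
  have hπc : adjacentMatching m c = a := by
    ext; rw [adjacentMatching_val]; dsimp only [c]; split_ifs <;> omega
  have hπa : adjacentMatching m a = c := by
    ext; rw [adjacentMatching_val, if_neg hodd]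
  apply h.1
  rw [hπa, ← hπc, ← h.2 c hca, hσ]

lemma val_adjacentMatching : (adjacentMatching m a : ℕ) = a + 1 := by
  rw [adjacentMatching_val, if_pos (h.val_mod_two hσ)]

lemma covBy_adjacentMatching : a ⋖ adjacentMatching m a := by
  rw [Fin.covBy_iff, Nat.covBy_iff_add_one_eq, h.val_adjacentMatching hσ]

lemma apply_lt {c : Fin (2 * m)} (hc : c < a) : σ c < a := by
  have := h.val_mod_two hσ
  rw [h.2 c hc, Fin.lt_def, adjacentMatching_val]
  rw [Fin.lt_def] at hc
  split_ifs <;> omega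

variable (hfix : ∀ i, σ i ≠ i)
include hfix

lemma lt_apply : a < σ a :=
  (hfix a).symm.lt_of_le (le_of_not_gt fun hlt => (h.apply_lt hσ hlt).ne (hσ a))

lemma lt_apply_adjacentMatching : adjacentMatching m a < σ (adjacentMatching m a) := by
  set b := adjacentMatching m a
  have hab : a ⋖ b := h.covBy_adjacentMatching hσ
  have hσb_ne : σ b ≠ a := fun hba => h.1 (by rw [← hba, hσ, hba])
  have hσb_not_lt : ¬σ b < a := fun hlt => (hσ b ▸ h.apply_lt hσ hlt).not_gt hab.lt
  have hlt : a < σ b := (not_lt.1 hσb_not_lt).lt_of_ne hσb_ne.symm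
  exact (hfix b).symm.lt_of_le (hab.ge_of_gt hlt)

lemma swap_mul_mul_swap :
    IsFirstDeviation (swap a (adjacentMatching m a) * σ * swap a (adjacentMatching m a)) a := by
  have hab := (h.covBy_adjacentMatching hσ).lt
  have hb := h.lt_apply_adjacentMatching hσ hfix
  refine ⟨by rw [swap_mul_mul_swap_apply_left hab hb]; exact hb.ne', fun c hc => ?_⟩
  have hσc := h.apply_lt hσ hc
  rw [Perm.mul_apply, Perm.mul_apply, swap_apply_of_ne_of_ne hc.ne (hc.trans hab).ne,
    swap_apply_of_ne_of_ne hσc.ne (hσc.trans hab).ne, h.2 c hc]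

end IsFirstDeviation

end AdjacentMatching

section SwapFirstDeviation

variable {m : ℕ} {σ : Perm (Fin (2 * m))} {a : Fin (2 * m)}

open Classical in
noncomputable def swapFirstDeviation (σ : Perm (Fin (2 * m))) : Perm (Fin (2 * m)) :=
  if h : ∃ a, IsFirstDeviation σ a then
    swap h.choose (adjacentMatching m h.choose) * σ * swap h.choose (adjacentMatching m h.choose)
  else σ

namespace IsFirstDeviation

lemma swapFirstDeviation_eq (h : IsFirstDeviation σ a) :
    swapFirstDeviation σ = swap a (adjacentMatching m a) * σ * swap a (adjacentMatching m a) := by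
  have hex : ∃ a, IsFirstDeviation σ a := ⟨a, h⟩
  rw [swapFirstDeviation, dif_pos hex, hex.choose_spec.unique h]

variable (hσ : Involutive σ) (hfix : ∀ i, σ i ≠ i) (h : IsFirstDeviation σ a)
include hσ hfix h

lemma swapFirstDeviation_swapFirstDeviation : swapFirstDeviation (swapFirstDeviation σ) = σ := by
  rw [h.swapFirstDeviation_eq, (h.swap_mul_mul_swap hσ hfix).swapFirstDeviation_eq]
  ext
  simp

lemma neg_one_pow_crossings_swapFirstDeviation :
    (-1 : ℤ) ^ crossings (swapFirstDeviation σ) = -(-1) ^ crossings σ := by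
  rw [h.swapFirstDeviation_eq, crossings_eq_card_crossingSet, crossings_eq_card_crossingSet,
    neg_one_pow_card_crossingSet_swap_mul_mul_swap hσ (h.covBy_adjacentMatching hσ)
      (h.lt_apply hσ hfix) (h.lt_apply_adjacentMatching hσ hfix)]

lemma swapFirstDeviation_ne : swapFirstDeviation σ ≠ σ := fun heq => by
  have hflip := h.neg_one_pow_crossings_swapFirstDeviation hσ hfix
  rw [heq, self_eq_neg] at hflip
  exact pow_ne_zero _ (by norm_num) hflip

end IsFirstDeviation

end SwapFirstDeviation

theorem stmt4_general (m : ℕ) :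
    (∑ σ : Equiv.Perm (Fin (2 * m)),
        if σ * σ = 1 ∧ ∀ i, σ i ≠ i then (-1 : ℤ) ^ crossings σ else 0) = 1 := by
  rw [← sum_filter]
  set S : Finset (Perm (Fin (2 * m))) := {σ | σ * σ = 1 ∧ ∀ i, σ i ≠ i}
  have hS : ∀ σ, σ ∈ S ↔ Involutive σ ∧ ∀ i, σ i ≠ i := by
    simp [S, Perm.involutive_iff_mul_self_eq_one]
  have hdev : ∀ σ ∈ S.erase (adjacentMatching m),
      Involutive σ ∧ (∀ i, σ i ≠ i) ∧ ∃ a, IsFirstDeviation σ a := fun σ hσ =>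
    ⟨((hS σ).1 (mem_of_mem_erase hσ)).1, ((hS σ).1 (mem_of_mem_erase hσ)).2,
      exists_isFirstDeviation (ne_of_mem_erase hσ)⟩
  rw [← add_sum_erase _ _ ((hS _).2 ⟨involutive_adjacentMatching, adjacentMatching_apply_ne⟩),
    crossings_adjacentMatching, pow_zero, add_eq_left]
  refine sum_involution (fun σ _ => swapFirstDeviation σ) (fun σ hσS => ?_) (fun σ hσS _ => ?_)
    (fun σ hσS => ?_) (fun σ hσS => ?_)
  all_goals obtain ⟨hσ, hfix, a, ha⟩ := hdev σ hσS
  · rw [ha.neg_one_pow_crossings_swapFirstDeviation hσ hfix, add_neg_cancel]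
  · exact ha.swapFirstDeviation_ne hσ hfix
  · rw [ha.swapFirstDeviation_eq]
    exact mem_erase.2 ⟨(ha.swap_mul_mul_swap hσ hfix).ne_adjacentMatching,
      (hS _).2 ⟨involutive_swap_mul_mul_swap hσ _ _, swap_mul_mul_swap_apply_ne hfix _ _⟩⟩
  · exact ha.swapFirstDeviation_swapFirstDeviation hσ hfix

theorem stmt4 (m : ℕ) (hm : 1 ≤ m) :
    (∑ σ : Equiv.Perm (Fin (2 * m)),
        if σ * σ = 1 ∧ ∀ i, σ i ≠ i then (-1 : ℤ) ^ crossings σ else 0) = 1 :=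
  stmt4_general m
end

section
/- (Lindström–Gessel–Viennot lemma, acyclic case) Let G be a finite acyclic digraph on vertices {1,…,n} with formal edge weights, M the weighted path matrix (M_{ij} = Σ_{paths P: i⇝j} wt(P), a polynomial since G is acyclic), and let 𝒜 = {a₁ < … < a_p}, ℬ = {b₁ < … < b_p} ⊆ {1,…,n}. Then det(M_{𝒜ℬ}) = Σ_𝐏 sgn(𝐏) wt(𝐏), the sum running over all self-avoiding p-paths 𝐏 from 𝒜 to ℬ. -/
/-!
Expanding the determinant, and each entry of the path matrix as a sum over walks, writes
`det M_{𝒜ℬ}` as the signed sum of the weights of all families of walks `aᵢ ⇝ b_{σ(i)}`.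
Families in which two walks meet cancel in pairs: let `i` be the least index of a walk meeting
another one, `v` the first vertex of walk `i` lying on another walk, and `j` the least other
index of a walk through `v`, and exchange the tails of walks `i` and `j` after `v`. This keeps
the multiset of edges and flips the sign of `σ`; since walks in an acyclic graph are
self-avoiding, the new family leads to the same `i`, `v`, `j`, so the exchange is an involution.
What survives are the families of pairwise disjoint walks, i.e. the self-avoiding `p`-paths.
-/

open Matrix

universe u

variable {n : ℕ} {E : Type u} [Fintype E] [DecidableEq E]

/-- `IsWalk src tgt a l b` : the list of edges `l` can be traversed consecutively,
starting at vertex `a` and ending at vertex `b` (a *path* from `a` to `b`). -/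
def IsWalk (src tgt : E → Fin n) : Fin n → List E → Fin n → Prop
  | a, [], b => a = b
  | a, e :: l, b => src e = a ∧ IsWalk src tgt (tgt e) l b

noncomputable def wt (l : List E) : MvPolynomial E ℚ :=
  (l.map MvPolynomial.X).prod

/-- The weighted path matrix: `M i j = ∑_{paths P : i ⇝ j} wt(P)` (in an acyclic digraph
there are finitely many paths between two given vertices, so this `finsum` is the
expected finite sum). -/
noncomputable def pathMat (src tgt : E → Fin n) :
    Matrix (Fin n) (Fin n) (MvPolynomial E ℚ) := fun i j =>
  ∑ᶠ P : {l : List E // IsWalk src tgt i l j}, wt P.1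

def pathVerts (tgt : E → Fin n) (a : Fin n) (l : List E) : Finset (Fin n) :=
  (a :: l.map tgt).toFinset

/-- A self-avoiding `p`-path from `A` to `B` (both of cardinality `p`): a `p`-tuple of
self-avoiding, pairwise vertex-disjoint paths, the `i`-th path going from the `i`-th
smallest element of `A` to the `σ(i)`-th smallest element of `B` for a permutation
`σ = σ_𝐏`. -/
structure SAPath (src tgt : E → Fin n) (A B : Finset (Fin n)) (p : ℕ)
    (hA : A.card = p) (hB : B.card = p) where
  /-- the permutation `σ_𝐏` matching starting points with endpoints -/
  perm : Equiv.Perm (Fin p)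
  path : Fin p → List E
  walk : ∀ i, IsWalk src tgt (A.orderIsoOfFin hA i) (path i) (B.orderIsoOfFin hB (perm i))
  selfavoid : ∀ i, (((A.orderIsoOfFin hA i : Fin n)) :: (path i).map tgt).Nodup
  pathdisj : ∀ i j, i ≠ j →
    Disjoint (pathVerts tgt (A.orderIsoOfFin hA i) (path i))
      (pathVerts tgt (A.orderIsoOfFin hA j) (path j))

theorem List.takeWhile_dropWhile_eq_nil {α : Type*} (p : α → Bool) (l : List α) :
    (l.dropWhile p).takeWhile p = [] := by
  cases h : l.dropWhile p with
  | nil => rfl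
  | cons x t =>
    have := List.head_dropWhile_not p (l := l) (by simp [h])
    simp_all

theorem List.takeWhile_takeWhile_append_dropWhile {α : Type*} (p : α → Bool) (l l' : List α) :
    (l.takeWhile p ++ l'.dropWhile p).takeWhile p = l.takeWhile p := by
  rw [List.takeWhile_append_of_pos fun _ => List.mem_takeWhile_imp,
    List.takeWhile_dropWhile_eq_nil, List.append_nil]

theorem List.dropWhile_takeWhile_append_dropWhile {α : Type*} (p : α → Bool) (l l' : List α) :
    (l.takeWhile p ++ l'.dropWhile p).dropWhile p = l'.dropWhile p := by
  rw [List.dropWhile_append_of_pos fun _ => List.mem_takeWhile_imp, List.dropWhile_idempotent]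

section Walks

variable {E : Type*} {src tgt : E → Fin n}

/-- The edges of `l` before the first one leaving `v`: for a walk through `v`, the part of the
walk up to its first visit of `v`. -/
def takeUntil (src : E → Fin n) (v : Fin n) (l : List E) : List E :=
  l.takeWhile (src · ≠ v)

def dropUntil (src : E → Fin n) (v : Fin n) (l : List E) : List E :=
  l.dropWhile (src · ≠ v)

theorem takeUntil_append_dropUntil (v : Fin n) (l : List E) :
    takeUntil src v l ++ dropUntil src v l = l :=
  List.takeWhile_append_dropWhile

theorem takeUntil_takeUntil_append_dropUntil (v : Fin n) (l l' : List E) :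
    takeUntil src v (takeUntil src v l ++ dropUntil src v l') = takeUntil src v l :=
  List.takeWhile_takeWhile_append_dropWhile _ l l'

theorem dropUntil_takeUntil_append_dropUntil (v : Fin n) (l l' : List E) :
    dropUntil src v (takeUntil src v l ++ dropUntil src v l') = dropUntil src v l' :=
  List.dropWhile_takeWhile_append_dropWhile _ l l'

theorem mem_of_mem_cons_map_takeUntil {a u v : Fin n} {l : List E}
    (h : u ∈ a :: (takeUntil src v l).map tgt) : u ∈ a :: l.map tgt :=
  List.cons_subset_cons _ (List.map_subset _ (List.takeWhile_subset _)) h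

theorem mem_of_mem_map_dropUntil {a u v : Fin n} {l : List E}
    (h : u ∈ (dropUntil src v l).map tgt) : u ∈ a :: l.map tgt :=
  List.mem_cons_of_mem _ (List.map_subset _ (List.dropWhile_subset _) h)

theorem wt_append (l l' : List E) : wt (l ++ l') = wt l * wt l' := by
  simp [wt]

def IsAcyclic (src tgt : E → Fin n) : Prop :=
  ∀ (v : Fin n) (l : List E), IsWalk src tgt v l v → l = []

variable {a b u v : Fin n} {l : List E}

theorem isWalk_append {l₁ l₂ : List E} :
    IsWalk src tgt a (l₁ ++ l₂) b ↔
      ∃ c, IsWalk src tgt a l₁ c ∧ IsWalk src tgt c l₂ b := by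
  induction l₁ generalizing a with
  | nil => simp [IsWalk]
  | cons e l ih => simp [IsWalk, ih, and_assoc]

namespace IsWalk

theorem mem (h : IsWalk src tgt a l b) : b ∈ a :: l.map tgt := by
  induction l generalizing a with
  | nil => exact List.mem_singleton.2 (Eq.symm h)
  | cons e l ih => exact List.mem_cons_of_mem _ (ih h.2)

theorem cons_map_tgt (h : IsWalk src tgt a l b) : a :: l.map tgt = l.map src ++ [b] := by
  induction l generalizing a with
  | nil => exact congrArg (· :: []) h
  | cons e l ih =>
    obtain ⟨rfl, h⟩ := h
    simp [ih h]

theorem takeUntil_dropUntil (h : IsWalk src tgt a l b) (hv : v ∈ a :: l.map tgt) :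
    IsWalk src tgt a (takeUntil src v l) v ∧ IsWalk src tgt v (dropUntil src v l) b := by
  induction l generalizing a with
  | nil =>
    obtain rfl := List.mem_singleton.1 hv
    exact ⟨rfl, h⟩
  | cons e l ih =>
    obtain ⟨rfl, h⟩ := h
    by_cases hev : src e = v
    · subst hev
      have htake : takeUntil src (src e) (e :: l) = [] := by simp [takeUntil]
      have hdrop : dropUntil src (src e) (e :: l) = e :: l := by simp [dropUntil]
      rw [htake, hdrop]
      exact ⟨rfl, rfl, h⟩
    · have hv' : v ∈ tgt e :: l.map tgt := by simpa [Ne.symm hev] using hv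
      simp only [takeUntil, dropUntil, hev, ne_eq, not_false_eq_true, decide_true,
        List.takeWhile_cons_of_pos, List.dropWhile_cons_of_pos]
      exact ⟨⟨rfl, (ih h hv').1⟩, (ih h hv').2⟩

theorem takeUntil_append_dropUntil {a' b' : Fin n} {l' : List E} (h : IsWalk src tgt a l b)
    (h' : IsWalk src tgt a' l' b') (hv : v ∈ a :: l.map tgt) (hv' : v ∈ a' :: l'.map tgt) :
    IsWalk src tgt a (takeUntil src v l ++ dropUntil src v l') b' :=
  isWalk_append.2 ⟨v, (h.takeUntil_dropUntil hv).1, (h'.takeUntil_dropUntil hv').2⟩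

theorem exists_first (h : IsWalk src tgt a l b) (q : Fin n → Prop)
    (hq : ∃ u ∈ a :: l.map tgt, q u) :
    ∃ v ∈ a :: l.map tgt, q v ∧ ∀ u ∈ (takeUntil src v l).map src, ¬q u := by
  induction l generalizing a with
  | nil =>
    obtain ⟨u, hu, hqu⟩ := hq
    obtain rfl := List.mem_singleton.1 hu
    exact ⟨u, hu, hqu, by simp [takeUntil]⟩
  | cons e l ih =>
    obtain ⟨rfl, h⟩ := h
    by_cases hqa : q (src e)
    · exact ⟨src e, List.mem_cons_self, hqa, by simp [takeUntil]⟩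
    · obtain ⟨v, hv, hqv, hfirst⟩ := ih h (by simpa [hqa] using hq)
      have hev : src e ≠ v := fun hev => hqa (hev ▸ hqv)
      refine ⟨v, List.mem_cons_of_mem _ hv, hqv, ?_⟩
      simpa [takeUntil, hev, hqa] using hfirst

theorem eq_or_mem_takeUntil (h : IsWalk src tgt a l b) (hu : u ∈ a :: l.map tgt)
    (hv : v ∈ a :: l.map tgt) :
    u = v ∨ u ∈ (takeUntil src v l).map src ∨ v ∈ (takeUntil src u l).map src := by
  induction l generalizing a with
  | nil => exact .inl ((List.mem_singleton.1 hu).trans (List.mem_singleton.1 hv).symm)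
  | cons e l ih =>
    obtain ⟨rfl, h⟩ := h
    by_cases heu : src e = u <;> by_cases hev : src e = v
    · exact .inl (heu.symm.trans hev)
    · exact .inr (.inl (by simp [takeUntil, hev, ← heu]))
    · exact .inr (.inr (by simp [takeUntil, heu, ← hev]))
    · have hu' : u ∈ tgt e :: l.map tgt := by simpa [Ne.symm heu] using hu
      have hv' : v ∈ tgt e :: l.map tgt := by simpa [Ne.symm hev] using hv
      simpa [takeUntil, heu, hev, Ne.symm heu, Ne.symm hev] using ih h hu' hv'

theorem nodup (hG : IsAcyclic src tgt) (h : IsWalk src tgt a l b) : (a :: l.map tgt).Nodup := by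
  induction l generalizing a with
  | nil => exact List.nodup_singleton a
  | cons e l ih =>
    obtain ⟨rfl, h⟩ := h
    refine List.nodup_cons.2 ⟨fun hmem => ?_, ih h⟩
    exact List.cons_ne_nil _ _ (hG _ _ ⟨rfl, (h.takeUntil_dropUntil hmem).1⟩)

theorem length_lt (hG : IsAcyclic src tgt) (h : IsWalk src tgt a l b) : l.length < n := by
  simpa using (h.nodup hG).length_le_card

theorem disjoint_map_src_map_tgt (hG : IsAcyclic src tgt) {x y : List E}
    (h : IsWalk src tgt a (x ++ y) b) : (x.map src).Disjoint (y.map tgt) := by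
  obtain ⟨c, hx, -⟩ := isWalk_append.1 h
  have hnd := h.nodup hG
  rw [List.map_append, ← List.cons_append, hx.cons_map_tgt, List.append_assoc,
    List.singleton_append] at hnd
  exact fun _ hu hu' => List.disjoint_of_nodup_append hnd hu (List.mem_cons_of_mem c hu')

end IsWalk

theorem finite_setOf_isWalk [Finite E] (hG : IsAcyclic src tgt) (a b : Fin n) :
    {l | IsWalk src tgt a l b}.Finite :=
  (List.finite_length_le E n).subset fun _ h => (IsWalk.length_lt hG h).le

end Walks

section PathSystems

variable {E : Type*} {src tgt : E → Fin n} {ι : Type*}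

@[ext]
structure PathSystem (src tgt : E → Fin n) (a b : ι → Fin n) where
  perm : Equiv.Perm ι
  path : ι → List E
  isWalk : ∀ i, IsWalk src tgt (a i) (path i) (b (perm i))

namespace PathSystem

variable {a b : ι → Fin n}

def equivSigma : PathSystem src tgt a b ≃
    Σ σ : Equiv.Perm ι, ∀ i, {l : List E // IsWalk src tgt (a i) l (b (σ i))} where
  toFun s := ⟨s.perm, fun i => ⟨s.path i, s.isWalk i⟩⟩
  invFun q := ⟨q.1, fun i => q.2 i, fun i => (q.2 i).2⟩
  left_inv _ := rfl
  right_inv _ := rfl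

theorem finite [Finite E] [Finite ι] (hG : IsAcyclic src tgt) :
    Finite (PathSystem src tgt a b) :=
  have (x y : Fin n) : Finite {l : List E // IsWalk src tgt x l y} :=
    (finite_setOf_isWalk hG x y).to_subtype
  Finite.of_equiv _ equivSigma.symm

noncomputable def weight [Fintype ι] [DecidableEq ι] (s : PathSystem src tgt a b) :
    MvPolynomial E ℚ :=
  ((Equiv.Perm.sign s.perm : ℤ) : MvPolynomial E ℚ) * ∏ i, wt (s.path i)

def verts (s : PathSystem src tgt a b) (i : ι) : Finset (Fin n) :=
  pathVerts tgt (a i) (s.path i)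

def Intersecting (s : PathSystem src tgt a b) : Prop :=
  ∃ i j, i ≠ j ∧ ¬Disjoint (s.verts i) (s.verts j)

theorem mem_verts {s : PathSystem src tgt a b} {i : ι} {u : Fin n} :
    u ∈ s.verts i ↔ u ∈ a i :: (s.path i).map tgt :=
  List.mem_toFinset

section TailSwap

variable [DecidableEq ι] (s : PathSystem src tgt a b) {i j : ι} {v : Fin n}

/-- Exchanges the tails of walks `i` and `j` after their first visit of `v`; walks other than `i`
and `j` are recombined unchanged from their two halves. -/
def tailSwap (i j : ι) (v : Fin n) (hi : v ∈ s.verts i) (hj : v ∈ s.verts j) :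
    PathSystem src tgt a b where
  perm := s.perm * Equiv.swap i j
  path k := takeUntil src v (s.path k) ++ dropUntil src v (s.path (Equiv.swap i j k))
  isWalk k := by
    rcases eq_or_ne k i with rfl | hki
    · simpa using (s.isWalk k).takeUntil_append_dropUntil (s.isWalk j) (mem_verts.1 hi)
        (mem_verts.1 hj)
    rcases eq_or_ne k j with rfl | hkj
    · simpa using (s.isWalk k).takeUntil_append_dropUntil (s.isWalk i) (mem_verts.1 hj)
        (mem_verts.1 hi)
    simpa [Equiv.swap_apply_of_ne_of_ne hki hkj, takeUntil_append_dropUntil] using s.isWalk k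

variable (hi : v ∈ s.verts i) (hj : v ∈ s.verts j)

theorem tailSwap_path_of_ne {k : ι} (hki : k ≠ i) (hkj : k ≠ j) :
    (s.tailSwap i j v hi hj).path k = s.path k := by
  simp [tailSwap, Equiv.swap_apply_of_ne_of_ne hki hkj, takeUntil_append_dropUntil]

theorem verts_tailSwap_of_ne {k : ι} (hki : k ≠ i) (hkj : k ≠ j) :
    (s.tailSwap i j v hi hj).verts k = s.verts k := by
  rw [verts, verts, s.tailSwap_path_of_ne hi hj hki hkj]

theorem tailSwap_tailSwap (hi' hj') :
    (s.tailSwap i j v hi hj).tailSwap i j v hi' hj' = s := by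
  ext1
  · simp [tailSwap, mul_assoc]
  · funext k
    simp [tailSwap, takeUntil_takeUntil_append_dropUntil, dropUntil_takeUntil_append_dropUntil,
      takeUntil_append_dropUntil]

theorem tailSwap_ne (hij : i ≠ j) : s.tailSwap i j v hi hj ≠ s := fun h =>
  hij (Equiv.swap_eq_one_iff.1 (mul_eq_left.1 (congrArg perm h)))

theorem weight_tailSwap [Fintype ι] (hij : i ≠ j) :
    (s.tailSwap i j v hi hj).weight = -s.weight := by
  have hprod : ∏ k, wt ((s.tailSwap i j v hi hj).path k) = ∏ k, wt (s.path k) := by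
    simp only [tailSwap, wt_append, Finset.prod_mul_distrib,
      Equiv.prod_comp (Equiv.swap i j) fun k => wt (dropUntil src v (s.path k))]
    simp only [← Finset.prod_mul_distrib, ← wt_append, takeUntil_append_dropUntil]
  rw [weight, weight, hprod]
  simp [tailSwap, Equiv.Perm.sign_mul, Equiv.Perm.sign_swap hij]

theorem mem_verts_tailSwap {k : ι} {u : Fin n} :
    u ∈ (s.tailSwap i j v hi hj).verts k ↔
      u ∈ a k :: (takeUntil src v (s.path k)).map tgt ∨
        u ∈ (dropUntil src v (s.path (Equiv.swap i j k))).map tgt := by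
  simp [verts, pathVerts, tailSwap, or_assoc]

theorem mem_verts_tailSwap_self {k : ι} (hk : v ∈ s.verts k) :
    v ∈ (s.tailSwap i j v hi hj).verts k :=
  (s.mem_verts_tailSwap hi hj).2
    (.inl ((s.isWalk k).takeUntil_dropUntil (mem_verts.1 hk)).1.mem)

theorem verts_tailSwap_subset (k : ι) :
    (s.tailSwap i j v hi hj).verts k ⊆ s.verts k ∪ s.verts (Equiv.swap i j k) := by
  intro u hu
  rw [Finset.mem_union, mem_verts, mem_verts]
  rcases (s.mem_verts_tailSwap hi hj).1 hu with hu | hu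
  · exact .inl (mem_of_mem_cons_map_takeUntil hu)
  · exact .inr (mem_of_mem_map_dropUntil hu)

end TailSwap

section Cancellation

variable [LinearOrder ι]

@[ext]
structure Crossing (s : PathSystem src tgt a b) where
  i : ι
  v : Fin n
  j : ι
  isLeast_i : IsLeast {k | ∃ l, k ≠ l ∧ ¬Disjoint (s.verts k) (s.verts l)} i
  mem_verts_i : v ∈ s.verts i
  notMem_verts_of_mem_takeUntil :
    ∀ u ∈ (takeUntil src v (s.path i)).map src, ∀ k ≠ i, u ∉ s.verts k
  isLeast_j : IsLeast {k | k ≠ i ∧ v ∈ s.verts k} j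

theorem nonempty_crossing [Finite ι] {s : PathSystem src tgt a b} (hs : s.Intersecting) :
    Nonempty (Crossing s) := by
  obtain ⟨i, hi, hi_min⟩ := Set.exists_min_image
    {k | ∃ l, k ≠ l ∧ ¬Disjoint (s.verts k) (s.verts l)} id (Set.toFinite _) hs
  obtain ⟨l, hil, hd⟩ := hi
  obtain ⟨u, hui, hul⟩ := Finset.not_disjoint_iff.1 hd
  obtain ⟨v, hv, ⟨k, hki, hvk⟩, hfirst⟩ := (s.isWalk i).exists_first
    (fun u => ∃ k ≠ i, u ∈ s.verts k) ⟨u, mem_verts.1 hui, l, hil.symm, hul⟩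
  obtain ⟨j, hj, hj_min⟩ := Set.exists_min_image {k | k ≠ i ∧ v ∈ s.verts k} id
    (Set.toFinite _) ⟨k, hki, hvk⟩
  exact ⟨⟨i, v, j, ⟨⟨l, hil, hd⟩, hi_min⟩, mem_verts.2 hv,
    fun u hu k hki huk => hfirst u hu ⟨k, hki, huk⟩, ⟨hj, hj_min⟩⟩⟩

theorem Crossing.intersecting {s : PathSystem src tgt a b} (c : Crossing s) : s.Intersecting :=
  ⟨c.i, c.isLeast_i.1⟩

namespace Crossing

variable {s : PathSystem src tgt a b} (c : Crossing s)

theorem j_ne_i : c.j ≠ c.i := c.isLeast_j.1.1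

theorem mem_verts_j : c.v ∈ s.verts c.j := c.isLeast_j.1.2

theorem i_le_j : c.i ≤ c.j :=
  c.isLeast_i.2
    ⟨c.i, c.j_ne_i, Finset.not_disjoint_iff.2 ⟨c.v, c.mem_verts_j, c.mem_verts_i⟩⟩

instance : Subsingleton (Crossing s) where
  allEq c d := by
    have hi : c.i = d.i := c.isLeast_i.unique d.isLeast_i
    have hv : c.v = d.v := by
      have hd := d.mem_verts_i
      rw [← hi] at hd
      rcases (s.isWalk c.i).eq_or_mem_takeUntil (mem_verts.1 c.mem_verts_i) (mem_verts.1 hd)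
        with h | h | h
      · exact h
      · exact absurd c.mem_verts_j
          (d.notMem_verts_of_mem_takeUntil c.v (hi ▸ h) c.j (hi ▸ c.j_ne_i))
      · exact absurd d.mem_verts_j
          (c.notMem_verts_of_mem_takeUntil d.v h d.j (hi ▸ d.j_ne_i))
    have hj : c.j = d.j := c.isLeast_j.unique (hi ▸ hv ▸ d.isLeast_j)
    exact Crossing.ext hi hv hj

variable [DecidableEq ι]

def swap : PathSystem src tgt a b :=
  s.tailSwap c.i c.j c.v c.mem_verts_i c.mem_verts_j

theorem isLeast_i_swap :
    IsLeast {k | ∃ l, k ≠ l ∧ ¬Disjoint (c.swap.verts k) (c.swap.verts l)} c.i := by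
  refine ⟨⟨c.j, c.j_ne_i.symm, Finset.not_disjoint_iff.2 ⟨c.v,
    s.mem_verts_tailSwap_self _ _ c.mem_verts_i,
    s.mem_verts_tailSwap_self _ _ c.mem_verts_j⟩⟩, ?_⟩
  rintro k ⟨l, hkl, hd⟩
  rcases eq_or_ne k c.i with rfl | hki
  · exact le_rfl
  rcases eq_or_ne k c.j with rfl | hkj
  · exact c.i_le_j
  obtain ⟨u, huk, hul⟩ := Finset.not_disjoint_iff.1 hd
  rw [swap, verts_tailSwap_of_ne _ _ _ hki hkj] at huk
  rcases Finset.mem_union.1 (s.verts_tailSwap_subset _ _ l hul) with h | h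
  · exact c.isLeast_i.2 ⟨l, hkl, Finset.not_disjoint_iff.2 ⟨u, huk, h⟩⟩
  · have hkl' : k ≠ Equiv.swap c.i c.j l := by
      rwa [Ne, eq_comm, Equiv.swap_apply_eq_iff, Equiv.swap_apply_of_ne_of_ne hki hkj, eq_comm]
    exact c.isLeast_i.2 ⟨_, hkl', Finset.not_disjoint_iff.2 ⟨u, huk, h⟩⟩

theorem notMem_verts_swap_of_mem_takeUntil (hG : IsAcyclic src tgt) :
    ∀ u ∈ (takeUntil src c.v (c.swap.path c.i)).map src, ∀ k ≠ c.i,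
      u ∉ c.swap.verts k := by
  intro u hu k hki huk
  rw [swap, tailSwap, takeUntil_takeUntil_append_dropUntil] at hu
  rcases (s.mem_verts_tailSwap _ _).1 huk with h | h
  · exact c.notMem_verts_of_mem_takeUntil u hu k hki
      (mem_verts.2 (mem_of_mem_cons_map_takeUntil h))
  by_cases hk : Equiv.swap c.i c.j k = c.i
  · -- `u` would be visited by walk `i` both before and after `v`
    rw [hk] at h
    have hw := s.isWalk c.i
    rw [← takeUntil_append_dropUntil c.v (s.path c.i)] at hw
    exact hw.disjoint_map_src_map_tgt hG hu h
  · exact c.notMem_verts_of_mem_takeUntil u hu _ hk (mem_verts.2 (mem_of_mem_map_dropUntil h))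

theorem isLeast_j_swap : IsLeast {k | k ≠ c.i ∧ c.v ∈ c.swap.verts k} c.j := by
  refine ⟨⟨c.j_ne_i, s.mem_verts_tailSwap_self _ _ c.mem_verts_j⟩, ?_⟩
  rintro k ⟨hki, hvk⟩
  rcases eq_or_ne k c.j with rfl | hkj
  · exact le_rfl
  rw [swap, verts_tailSwap_of_ne _ _ _ hki hkj] at hvk
  exact c.isLeast_j.2 ⟨hki, hvk⟩

def flip (hG : IsAcyclic src tgt) : Crossing c.swap :=
  ⟨c.i, c.v, c.j, c.isLeast_i_swap, s.mem_verts_tailSwap_self _ _ c.mem_verts_i,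
    c.notMem_verts_swap_of_mem_takeUntil hG, c.isLeast_j_swap⟩

theorem swap_flip (hG : IsAcyclic src tgt) : (c.flip hG).swap = s :=
  s.tailSwap_tailSwap _ _ _ _

theorem weight_swap [Fintype ι] : c.swap.weight = -s.weight :=
  s.weight_tailSwap _ _ c.j_ne_i.symm

theorem swap_ne : c.swap ≠ s :=
  s.tailSwap_ne _ _ c.j_ne_i.symm

end Crossing

theorem sum_filter_intersecting_weight_eq_zero [Fintype ι]
    [Fintype (PathSystem src tgt a b)]
    [DecidablePred fun s : PathSystem src tgt a b => s.Intersecting]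
    (hG : IsAcyclic src tgt) :
    ∑ s ∈ Finset.univ.filter Intersecting, (s : PathSystem src tgt a b).weight = 0 := by
  refine Finset.sum_involution
    (fun s hs => (nonempty_crossing (Finset.mem_filter.1 hs).2).some.swap)
    (fun s hs => by rw [Crossing.weight_swap, add_neg_cancel])
    (fun s hs _ => Crossing.swap_ne _)
    (fun s hs => Finset.mem_filter.2 ⟨Finset.mem_univ _, (Crossing.flip _ hG).intersecting⟩)
    (fun s hs => ?_)
  set c := (nonempty_crossing (Finset.mem_filter.1 hs).2).some
  rw [Subsingleton.elim (nonempty_crossing (c.flip hG).intersecting).some (c.flip hG),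
    Crossing.swap_flip]

theorem finsum_weight_eq_finsum_nonIntersecting [Finite E] [Fintype ι]
    (hG : IsAcyclic src tgt) :
    ∑ᶠ s : PathSystem src tgt a b, s.weight =
      ∑ᶠ s : {s : PathSystem src tgt a b // ¬s.Intersecting}, s.1.weight := by
  classical
  have := PathSystem.finite hG (a := a) (b := b)
  let _ := Fintype.ofFinite (PathSystem src tgt a b)
  rw [finsum_eq_sum_of_fintype, finsum_eq_sum_of_fintype,
    ← Finset.sum_filter_add_sum_filter_not Finset.univ Intersecting,
    sum_filter_intersecting_weight_eq_zero hG, zero_add,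
    Finset.sum_subtype (p := fun s => ¬s.Intersecting) _ (by simp)]

end Cancellation

theorem det_submatrix_pathMat [Finite E] [Fintype ι] [DecidableEq ι] (hG : IsAcyclic src tgt)
    (a b : ι → Fin n) :
    ((pathMat src tgt).submatrix a b).det = ∑ᶠ s : PathSystem src tgt a b, s.weight := by
  let _ (x y : Fin n) : Fintype {l : List E // IsWalk src tgt x l y} :=
    (finite_setOf_isWalk hG x y).fintype
  let _ : Fintype (PathSystem src tgt a b) := Fintype.ofEquiv _ equivSigma.symm
  have hM (x y : Fin n) : pathMat src tgt x y = ∑ P : {l // IsWalk src tgt x l y}, wt P.1 :=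
    finsum_eq_sum_of_fintype _
  rw [finsum_eq_sum_of_fintype, ← det_transpose, det_apply']
  calc ∑ σ : Equiv.Perm ι, ((Equiv.Perm.sign σ : ℤ) : MvPolynomial E ℚ) *
        ∏ i, ((pathMat src tgt).submatrix a b)ᵀ (σ i) i
      = ∑ σ : Equiv.Perm ι, ∑ P : ∀ i, {l // IsWalk src tgt (a i) l (b (σ i))},
          ((Equiv.Perm.sign σ : ℤ) : MvPolynomial E ℚ) * ∏ i, wt (P i).1 := by
        simp only [transpose_apply, submatrix_apply, hM, Fintype.prod_sum, Finset.mul_sum]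
    _ = ∑ q, (equivSigma.symm q).weight :=
        (Fintype.sum_sigma fun q => (equivSigma.symm q).weight).symm
    _ = ∑ s : PathSystem src tgt a b, s.weight := equivSigma.symm.sum_comp weight

end PathSystem

end PathSystems

def SAPath.equivNonIntersecting {E : Type*} {src tgt : E → Fin n} (hG : IsAcyclic src tgt)
    {A B : Finset (Fin n)} {p : ℕ} {hA : A.card = p} {hB : B.card = p} :
    {s : PathSystem src tgt (fun i => (A.orderIsoOfFin hA i : Fin n))
        (fun j => (B.orderIsoOfFin hB j : Fin n)) // ¬s.Intersecting} ≃
      SAPath src tgt A B p hA hB where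
  toFun s := ⟨s.1.perm, s.1.path, s.1.isWalk, fun i => (s.1.isWalk i).nodup hG,
    fun i j hij => by_contra fun h => s.2 ⟨i, j, hij, h⟩⟩
  invFun F := ⟨⟨F.perm, F.path, F.walk⟩, fun ⟨i, j, hij, h⟩ => h (F.pathdisj i j hij)⟩
  left_inv _ := rfl
  right_inv _ := rfl

theorem stmt8_general {n : ℕ} {E : Type} [Fintype E] (src tgt : E → Fin n)
    (hacyc : ∀ (v : Fin n) (l : List E), IsWalk src tgt v l v → l = [])
    (𝒜 ℬ : Finset (Fin n)) (p : ℕ) (hA : 𝒜.card = p) (hB : ℬ.card = p) :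
    ((pathMat src tgt).submatrix (fun i => (𝒜.orderIsoOfFin hA i : Fin n))
        (fun j => (ℬ.orderIsoOfFin hB j : Fin n))).det =
      ∑ᶠ F : SAPath src tgt 𝒜 ℬ p hA hB,
        ((Equiv.Perm.sign F.perm : ℤ) : MvPolynomial E ℚ) * ∏ i, wt (F.path i) := by
  rw [PathSystem.det_submatrix_pathMat hacyc,
    PathSystem.finsum_weight_eq_finsum_nonIntersecting hacyc,
    ← finsum_comp_equiv (SAPath.equivNonIntersecting hacyc)]
  rfl

theorem stmt8 {n : ℕ} {E : Type} [Fintype E] [DecidableEq E] (src tgt : E → Fin n)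
    (hacyc : ∀ (v : Fin n) (l : List E), IsWalk src tgt v l v → l = [])
    (𝒜 ℬ : Finset (Fin n)) (p : ℕ) (hA : 𝒜.card = p) (hB : ℬ.card = p) :
    ((pathMat src tgt).submatrix (fun i => (𝒜.orderIsoOfFin hA i : Fin n))
        (fun j => (ℬ.orderIsoOfFin hB j : Fin n))).det =
      ∑ᶠ F : SAPath src tgt 𝒜 ℬ p hA hB,
        ((Equiv.Perm.sign F.perm : ℤ) : MvPolynomial E ℚ) * ∏ i, wt (F.path i) :=
  stmt8_general src tgt hacyc 𝒜 ℬ p hA hB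
end
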